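/- Let n ≥ 2, 0 < q < n, and let f be a measurable function on ℝⁿ belonging to the Lorentz space L(n,1), i.e. ∫₀^∞ |{x : |f(x)| > t}|^{1/n} dt < ∞. Then for every x₀ ∈ ℝⁿ the modified Riesz potential Ĩ^f_q(x₀, r) = ∫₀^r ( ⨍_{B_s(x₀)} |f|^q )^{1/q} ds is finite for every r > 0 and satisfies Ĩ^f_q(x₀, r) → 0 as r → 0. -/

import Mathlib

open MeasureTheory Filter Metric Set
open scoped RealInnerProductSpace ENNReal NNReal Topology Classical

noncomputable section

abbrev Eu (n : ℕ) := EuclideanSpace ℝ (Fin n)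

variable {n : ℕ}

/-- The value of the normalized `p`-Laplacian symbol
`F(a, X) = trace X + (p-2) ⟨X a, a⟩ / |a|²`. -/
def Fop (p : ℝ) (a : Eu n) (X : Eu n →L[ℝ] Eu n) : ℝ :=
  LinearMap.trace ℝ (Eu n) ↑X + (p - 2) * ⟪X a, a⟫ / ‖a‖ ^ 2

/-- Upper semicontinuous relaxation `F*`. -/
def Fupper (p : ℝ) (a : Eu n) (X : Eu n →L[ℝ] Eu n) : ℝ :=
  if a = 0 then ⨆ b : {b : Eu n // b ≠ 0}, Fop p b.1 X else Fop p a X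

/-- Lower semicontinuous relaxation `F_*`. -/
def Flower (p : ℝ) (a : Eu n) (X : Eu n →L[ℝ] Eu n) : ℝ :=
  if a = 0 then ⨅ b : {b : Eu n // b ≠ 0}, Fop p b.1 X else Fop p a X

/-- Hessian of a function, as the derivative of its gradient. -/
def hess (φ : Eu n → ℝ) (x : Eu n) : Eu n →L[ℝ] Eu n := fderiv ℝ (gradient φ) x

/-- Viscosity subsolution of the perturbed normalized `p`-Laplace equation
`(δ_ij + (p-2)(δ∂ᵢu+Aᵢ)(δ∂ⱼu+Aⱼ)/|δ∇u+A|²) ∂ᵢⱼ u = f` on `Ω`: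
for every `C²` test function `φ` touching `u` from above at `x₀ ∈ Ω`,
`ess limsup_{x→x₀} (G*(∇φ(x), ∇²φ(x)) - f(x)) ≥ 0` where `G(q,X) = F(δq+A, X)`. -/
def ViscSub (p δ : ℝ) (A : Eu n) (Ω : Set (Eu n)) (f u : Eu n → ℝ) : Prop :=
  ∀ φ : Eu n → ℝ, ContDiff ℝ 2 φ → ∀ x₀ ∈ Ω,
    IsLocalMax (fun x => u x - φ x) x₀ →
    0 ≤ limsup (fun x => Fupper p (δ • gradient φ x + A) (hess φ x) - f x)
        ((𝓝 x₀) ⊓ MeasureTheory.ae (volume : Measure (Eu n)))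

/-- Viscosity supersolution of the perturbed normalized `p`-Laplace equation. -/
def ViscSuper (p δ : ℝ) (A : Eu n) (Ω : Set (Eu n)) (f u : Eu n → ℝ) : Prop :=
  ∀ φ : Eu n → ℝ, ContDiff ℝ 2 φ → ∀ x₀ ∈ Ω,
    IsLocalMin (fun x => u x - φ x) x₀ →
    liminf (fun x => Flower p (δ • gradient φ x + A) (hess φ x) - f x)
        ((𝓝 x₀) ⊓ MeasureTheory.ae (volume : Measure (Eu n))) ≤ 0

/-- Continuous viscosity solution of the perturbed normalized `p`-Laplace equation. -/
def ViscSol (p δ : ℝ) (A : Eu n) (Ω : Set (Eu n)) (f u : Eu n → ℝ) : Prop :=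
  ContinuousOn u Ω ∧ ViscSub p δ A Ω f u ∧ ViscSuper p δ A Ω f u

/-- Viscosity solution of `Δ_p^N u = f` on `Ω` (the case `δ = 1`, `A = 0`). -/
def NormPLapSol (p : ℝ) (Ω : Set (Eu n)) (f u : Eu n → ℝ) : Prop :=
  ViscSol p 1 0 Ω f u

/-- `( ⨍_{B_s(x₀)} |f|^q )^{1/q}`. -/
def avgLq (q : ℝ) (f : Eu n → ℝ) (x₀ : Eu n) (s : ℝ) : ℝ :=
  (⨍ x in ball x₀ s, |f x| ^ q) ^ (1 / q)

/-- The modified Riesz potential `Ĩ^f_q(x₀, r) = ∫₀^r ( ⨍_{B_s(x₀)} |f|^q )^{1/q} ds`. -/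
def rieszPot (q : ℝ) (f : Eu n → ℝ) (x₀ : Eu n) (r : ℝ) : ℝ :=
  ∫ s in Ioc (0:ℝ) r, avgLq q f x₀ s

/-- Membership in the Lorentz space `L(n,1)`:
`∫₀^∞ |{x : |f(x)| > t}|^{1/n} dt < ∞`. -/
def MemLorentzN1 (n : ℕ) (f : Eu n → ℝ) : Prop :=
  ∫⁻ t in Ioi (0:ℝ), (volume {x : Eu n | t < |f x|}) ^ ((1:ℝ) / n) ≠ ⊤

/-- Supremum of `|u|` over a set (the `L^∞` norm of a continuous function). -/
def supAbsOn (u : Eu n → ℝ) (s : Set (Eu n)) : ℝ := ⨆ x : s, |u x.1|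

/-- `v` is `p`-harmonic on `Ω`: a continuous weak solution of
`div(|∇v|^{p-2} ∇v) = 0`, with `g` its weak gradient. -/
def IsPHarmonic (p : ℝ) (Ω : Set (Eu n)) (v : Eu n → ℝ) : Prop :=
  ContinuousOn v Ω ∧
  ∃ g : Eu n → Eu n,
    (∀ K : Set (Eu n), K ⊆ Ω → IsCompact K →
      IntegrableOn (fun x => ‖g x‖ ^ p) K) ∧
    (∀ φ : Eu n → ℝ, ContDiff ℝ (⊤ : ℕ∞) φ → HasCompactSupport φ → tsupport φ ⊆ Ω →
      ∀ i : Fin n, ∫ x in Ω, v x * gradient φ x i = - ∫ x in Ω, g x i * φ x) ∧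
    (∀ φ : Eu n → ℝ, ContDiff ℝ (⊤ : ℕ∞) φ → HasCompactSupport φ → tsupport φ ⊆ Ω →
      ∫ x in Ω, ‖g x‖ ^ (p - 2) * ⟪g x, gradient φ x⟫ = 0)
section RieszAux

/-- `∫⁻_{(0,ℓ]} q t^{q-1} dt = ℓ^q`. -/
lemma lint_Ioc_rpow {q ℓ : ℝ} (hq : 0 < q) (hℓ : 0 ≤ ℓ) :
    ∫⁻ t in Ioc (0:ℝ) ℓ, ENNReal.ofReal (q * t ^ (q-1)) = ENNReal.ofReal (ℓ ^ q) := by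
  have hint : IntegrableOn (fun t : ℝ => q * t ^ (q-1)) (Ioc 0 ℓ) := by
    have := (intervalIntegral.intervalIntegrable_rpow' (a := 0) (b := ℓ)
      (r := q - 1) (by linarith)).const_mul q
    rw [intervalIntegrable_iff_integrableOn_Ioc_of_le hℓ] at this
    exact this
  rw [← MeasureTheory.ofReal_integral_eq_lintegral_ofReal hint ?nn]
  case nn =>
    filter_upwards [self_mem_ae_restrict (measurableSet_Ioc)] with t ht
    exact mul_nonneg hq.le (Real.rpow_nonneg ht.1.le _)
  congr 1
  rw [← intervalIntegral.integral_of_le hℓ]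
  rw [intervalIntegral.integral_const_mul, integral_rpow (Or.inl (by linarith))]
  rw [sub_add_cancel, Real.zero_rpow hq.ne', sub_zero]
  field_simp

/-- `∫⁻_{(c,∞)} t^p dt = c^{p+1}/(-(p+1))` for `p < -1`, `c > 0`. -/
lemma lint_Ioi_rpow {p c : ℝ} (hp : p < -1) (hc : 0 < c) :
    ∫⁻ t in Ioi c, ENNReal.ofReal (t ^ p) = ENNReal.ofReal (c ^ (p+1) / (-(p+1))) := by
  rw [← MeasureTheory.ofReal_integral_eq_lintegral_ofReal
    (integrableOn_Ioi_rpow_of_lt hp hc) ?nn]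
  case nn =>
    filter_upwards [self_mem_ae_restrict (measurableSet_Ioi)] with t ht
    exact Real.rpow_nonneg (hc.trans ht).le _
  rw [integral_Ioi_rpow_of_lt hp hc]
  congr 1
  rw [neg_div, div_neg]

/-- Decay bound: if `ν` is antitone on `(0,∞)`, `ν ≤ 1`, then
`∫ q t^{q-1} ν(t) dt ≤ C (∫ ν^γ)^q` provided `qγ < 1`. -/
lemma decay_bound {q γ : ℝ} (hq : 0 < q) (hγ : 0 < γ) (hqγ : q < 1/γ)
    {ν : ℝ → ℝ≥0∞} (hanti : AntitoneOn ν (Ioi 0)) (hν1 : ∀ t, ν t ≤ 1) :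
    ∫⁻ t in Ioi 0, ENNReal.ofReal (q * t ^ (q-1)) * ν t ≤
      ENNReal.ofReal (1 + q / (1/γ - q)) * (∫⁻ t in Ioi 0, ν t ^ γ) ^ q := by
  set L := ∫⁻ t in Ioi 0, ν t ^ γ with hL
  have hC : (0:ℝ) < 1 + q / (1/γ - q) :=
    add_pos one_pos (div_pos hq (by linarith))
  have key : ∀ t : ℝ, 0 < t → ν t ≤ (L / ENNReal.ofReal t) ^ (1/γ) := by
    intro t ht
    have h1 : ν t ^ γ * ENNReal.ofReal t ≤ L := by
      have : ν t ^ γ * ENNReal.ofReal t = ∫⁻ τ in Ioc (0:ℝ) t, ν t ^ γ := by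
        rw [setLIntegral_const, Real.volume_Ioc, sub_zero]
      rw [this, hL]
      refine le_trans (setLIntegral_mono' measurableSet_Ioc ?_)
        (lintegral_mono_set Ioc_subset_Ioi_self)
      intro τ hτ
      exact ENNReal.rpow_le_rpow (hanti hτ.1 (lt_of_lt_of_le hτ.1 hτ.2) hτ.2) hγ.le
    have h2 : ν t ^ γ ≤ L / ENNReal.ofReal t := by
      rw [ENNReal.le_div_iff_mul_le (Or.inl (by simp [ht])) (Or.inl ENNReal.ofReal_ne_top)]
      exact h1
    calc ν t = (ν t ^ γ) ^ (1/γ) := by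
          rw [← ENNReal.rpow_mul, mul_one_div, div_self hγ.ne', ENNReal.rpow_one]
      _ ≤ (L / ENNReal.ofReal t) ^ (1/γ) :=
          ENNReal.rpow_le_rpow h2 (by positivity)
  rcases eq_zero_or_pos L with hL0 | hLpos
  · have hz : ∀ t ∈ Ioi (0:ℝ), ENNReal.ofReal (q * t ^ (q-1)) * ν t = 0 := by
      intro t ht
      have h := key t ht
      rw [hL0, ENNReal.zero_div, ENNReal.zero_rpow_of_pos (by positivity)] at h
      rw [le_zero_iff.mp h, mul_zero]
    rw [setLIntegral_congr_fun measurableSet_Ioi hz, lintegral_zero]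
    exact zero_le
  by_cases hLtop : L = ⊤
  · rw [hLtop, ENNReal.top_rpow_of_pos hq, ENNReal.mul_top (by simpa using hC.not_ge)]
    exact le_top
  set ℓ := L.toReal with hℓ
  have hℓpos : 0 < ℓ := ENNReal.toReal_pos hLpos.ne' hLtop
  have hLℓ : L = ENNReal.ofReal ℓ := (ENNReal.ofReal_toReal hLtop).symm
  have split : Ioi (0:ℝ) = Ioc 0 ℓ ∪ Ioi ℓ := (Ioc_union_Ioi_eq_Ioi hℓpos.le).symm
  rw [split, lintegral_union measurableSet_Ioi (Set.Ioc_disjoint_Ioi le_rfl)]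
  have part1 : ∫⁻ t in Ioc (0:ℝ) ℓ, ENNReal.ofReal (q * t ^ (q-1)) * ν t
      ≤ ENNReal.ofReal (ℓ ^ q) := by
    rw [← lint_Ioc_rpow hq hℓpos.le]
    refine setLIntegral_mono' measurableSet_Ioc fun t _ => ?_
    calc ENNReal.ofReal (q * t ^ (q-1)) * ν t
        ≤ ENNReal.ofReal (q * t ^ (q-1)) * 1 := mul_le_mul_right (hν1 t) _
      _ = ENNReal.ofReal (q * t ^ (q-1)) := mul_one _
  have part2 : ∫⁻ t in Ioi ℓ, ENNReal.ofReal (q * t ^ (q-1)) * ν t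
      ≤ ENNReal.ofReal (q / (1/γ - q) * ℓ ^ q) := by
    have step1 : ∫⁻ t in Ioi ℓ, ENNReal.ofReal (q * t ^ (q-1)) * ν t
        ≤ ∫⁻ t in Ioi ℓ, ENNReal.ofReal (q * ℓ ^ (1/γ)) * ENNReal.ofReal (t ^ (q-1-1/γ)) := by
      refine setLIntegral_mono' measurableSet_Ioi fun t ht => ?_
      have htpos : 0 < t := hℓpos.trans ht
      have hν : ν t ≤ ENNReal.ofReal ((ℓ/t) ^ (1/γ)) := by
        have := key t htpos
        rwa [hLℓ, ← ENNReal.ofReal_div_of_pos htpos,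
          ENNReal.ofReal_rpow_of_nonneg (by positivity) (by positivity)] at this
      calc ENNReal.ofReal (q * t ^ (q-1)) * ν t
          ≤ ENNReal.ofReal (q * t ^ (q-1)) * ENNReal.ofReal ((ℓ/t) ^ (1/γ)) :=
            mul_le_mul_right hν _
        _ = ENNReal.ofReal (q * t ^ (q-1) * (ℓ/t) ^ (1/γ)) :=
            (ENNReal.ofReal_mul (by positivity)).symm
        _ = ENNReal.ofReal (q * ℓ ^ (1/γ)) * ENNReal.ofReal (t ^ (q-1-1/γ)) := by
            rw [← ENNReal.ofReal_mul (by positivity)]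
            congr 1
            rw [Real.div_rpow hℓpos.le htpos.le]
            conv_rhs => rw [Real.rpow_sub htpos]
            field_simp
    rw [lintegral_const_mul' _ _ ENNReal.ofReal_ne_top,
      lint_Ioi_rpow (by linarith) hℓpos] at step1
    refine step1.trans (le_of_eq ?_)
    rw [← ENNReal.ofReal_mul (by positivity)]
    congr 1
    have hpow : ℓ ^ (1/γ) * ℓ ^ (q - 1/γ) = ℓ ^ q := by
      rw [← Real.rpow_add hℓpos]; congr 1; ring
    rw [show q-1-1/γ+1 = q - 1/γ by ring]
    rw [show -(q - 1/γ) = 1/γ - q by ring]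
    rw [← hpow]
    field_simp
  refine (add_le_add part1 part2).trans (le_of_eq ?_)
  rw [← ENNReal.ofReal_add (by positivity)
    (mul_nonneg (div_nonneg hq.le (by linarith)) (Real.rpow_nonneg hℓpos.le _))]
  rw [hLℓ, ENNReal.ofReal_rpow_of_pos hℓpos, ← ENNReal.ofReal_mul hC.le]
  congr 1; ring

/-- Kernel bound: `∫₀^∞ min(1, (a/s)^p) ds ≤ a (1 + 1/(p-1))` for `p > 1`. -/
lemma kernel_bound {p a : ℝ} (hp : 1 < p) (ha : 0 ≤ a) :
    ∫⁻ s in Ioi (0:ℝ), min 1 (ENNReal.ofReal ((a/s) ^ p)) ≤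
      ENNReal.ofReal (a * (1 + 1/(p-1))) := by
  rcases eq_or_lt_of_le ha with rfl | hapos
  · have hz : ∀ s ∈ Ioi (0:ℝ), min 1 (ENNReal.ofReal ((0/s : ℝ) ^ p)) = 0 := by
      intro s _
      rw [zero_div, Real.zero_rpow (by positivity), ENNReal.ofReal_zero, min_eq_right zero_le]
    rw [setLIntegral_congr_fun measurableSet_Ioi hz, lintegral_zero]
    exact zero_le
  have split : Ioi (0:ℝ) = Ioc 0 a ∪ Ioi a := (Ioc_union_Ioi_eq_Ioi hapos.le).symm
  rw [split, lintegral_union measurableSet_Ioi (Set.Ioc_disjoint_Ioi le_rfl)]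
  have part1 : ∫⁻ s in Ioc (0:ℝ) a, min 1 (ENNReal.ofReal ((a/s) ^ p)) ≤ ENNReal.ofReal a := by
    calc ∫⁻ s in Ioc (0:ℝ) a, min 1 (ENNReal.ofReal ((a/s) ^ p))
        ≤ ∫⁻ _ in Ioc (0:ℝ) a, 1 := setLIntegral_mono' measurableSet_Ioc fun s _ => min_le_left _ _
      _ = ENNReal.ofReal a := by rw [setLIntegral_const, one_mul, Real.volume_Ioc, sub_zero]
  have part2 : ∫⁻ s in Ioi a, min 1 (ENNReal.ofReal ((a/s) ^ p)) ≤
      ENNReal.ofReal (a * (1/(p-1))) := by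
    have step : ∫⁻ s in Ioi a, min 1 (ENNReal.ofReal ((a/s) ^ p)) ≤
        ∫⁻ s in Ioi a, ENNReal.ofReal (a ^ p) * ENNReal.ofReal (s ^ (-p)) := by
      refine setLIntegral_mono' measurableSet_Ioi fun s hs => ?_
      have hspos : 0 < s := hapos.trans hs
      refine (min_le_right _ _).trans (le_of_eq ?_)
      rw [← ENNReal.ofReal_mul (by positivity)]
      congr 1
      rw [Real.div_rpow hapos.le hspos.le, Real.rpow_neg hspos.le]
      ring
    rw [lintegral_const_mul' _ _ ENNReal.ofReal_ne_top,
      lint_Ioi_rpow (by linarith) hapos] at step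
    refine step.trans (le_of_eq ?_)
    rw [← ENNReal.ofReal_mul (by positivity)]
    congr 1
    have hpow : a ^ p * a ^ (-p + 1) = a := by
      rw [← Real.rpow_add hapos]
      simp
    rw [show -(-p+1) = p - 1 by ring]
    rw [show a ^ p * (a ^ (-p+1) / (p-1)) = (a ^ p * a ^ (-p+1)) / (p-1) by ring, hpow]
    ring
  refine (add_le_add part1 part2).trans (le_of_eq ?_)
  rw [← ENNReal.ofReal_add hapos.le
    (mul_nonneg hapos.le (div_nonneg one_pos.le (by linarith)))]
  congr 1; ring

end RieszAux

/-- **Vanishing of the modified Riesz potential for `L(n,1)` data.**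
If `f ∈ L(n,1)` and `0 < q < n`, then for every `x₀` the potential
`Ĩ^f_q(x₀, r)` is finite for every `r > 0` and tends to `0` as `r → 0`. -/
theorem rieszPot_tendsto_zero (n : ℕ) (hn : 2 ≤ n) (q : ℝ) (hq0 : 0 < q)
    (hqn : q < n) (f : Eu n → ℝ) (hmeas : Measurable f)
    (hf : MemLorentzN1 n f) (x₀ : Eu n) :
    (∀ r > (0:ℝ), IntegrableOn (fun s => avgLq q f x₀ s) (Ioc (0:ℝ) r)) ∧
    Tendsto (fun r => rieszPot q f x₀ r) (𝓝[>] (0:ℝ)) (𝓝 0) := by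
  classical
  -- basic positivity facts
  have hn0 : 0 < n := by omega
  have hnR : (0:ℝ) < n := by exact_mod_cast hn0
  haveI : Nontrivial (Eu n) := Module.nontrivial_of_finrank_pos
    (by rw [finrank_euclideanSpace_fin]; exact hn0 : 0 < Module.finrank ℝ (Eu n))
  set n' : ℝ := (n : ℝ) with hn'def
  set γ : ℝ := 2 / (n' + q) with hγdef
  have hnq : 0 < n' + q := by positivity
  have hγpos : 0 < γ := by positivity
  have hγinv : 1/γ = (n' + q)/2 := by rw [hγdef, one_div_div]
  have hqγ : q < 1/γ := by rw [hγinv]; linarith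
  have hnγ : 1 < n' * γ := by
    rw [hγdef, show n' * (2 / (n' + q)) = 2 * n' / (n' + q) by ring, lt_div_iff₀ hnq]
    linarith
  have hγn : 1/n' ≤ γ := by
    rw [hγdef, div_le_div_iff₀ hnR hnq]; linarith
  -- the unit ball volume
  set κ : ℝ≥0∞ := volume (ball (0 : Eu n) 1) with hκdef
  have hκ0 : κ ≠ 0 := (measure_ball_pos _ _ one_pos).ne'
  have hκtop : κ ≠ ⊤ := measure_ball_lt_top.ne
  set κr : ℝ := κ.toReal with hκrdef
  have hκr : 0 < κr := ENNReal.toReal_pos hκ0 hκtop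
  have hκr' : ENNReal.ofReal κr = κ := ENNReal.ofReal_toReal hκtop
  -- the distribution function
  set μ' : ℝ → ℝ≥0∞ := fun t => volume {x : Eu n | t < |f x|} with hμdef
  have hμanti : Antitone μ' := fun t₁ t₂ h =>
    measure_mono (fun x hx => lt_of_le_of_lt h hx)
  have hμmeas : Measurable μ' := hμanti.measurable
  have hB : ∫⁻ t in Ioi (0:ℝ), μ' t ^ (1/n') ≠ ⊤ := hf
  -- volume of balls
  have hm : ∀ s : ℝ, 0 ≤ s → volume (ball x₀ s) = ENNReal.ofReal (s ^ n') * κ := by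
    intro s hs
    rw [Measure.addHaar_ball _ _ hs, finrank_euclideanSpace_fin, ← Real.rpow_natCast s n, hκdef]
  -- main objects
  set ν : ℝ → ℝ → ℝ≥0∞ :=
    fun s t => min 1 (μ' t / (ENNReal.ofReal (s ^ n') * κ)) with hνdef
  set Lf : ℝ → ℝ≥0∞ := fun s => ∫⁻ t in Ioi (0:ℝ), ν s t ^ γ with hLdef
  set C₃ : ℝ≥0∞ := ENNReal.ofReal (1 + q / (1/γ - q)) with hC₃def
  set c₄ : ℝ≥0∞ := C₃ ^ (1/q) with hc₄def
  have hC₃top : C₃ ≠ ⊤ := ENNReal.ofReal_ne_top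
  have hc₄top : c₄ ≠ ⊤ := by
    rw [hc₄def]
    exact ENNReal.rpow_ne_top_of_nonneg (by positivity) hC₃top
  set G : ℝ → ℝ≥0∞ := fun s => ∫⁻ x in ball x₀ s, ENNReal.ofReal (|f x| ^ q) with hGdef
  set φ : ℝ → ℝ :=
    fun s => ((G s / (ENNReal.ofReal (s ^ n') * κ)) ^ (1/q)).toReal with hφdef
  -- measurability of the various objects
  have habsmeas : Measurable fun x => |f x| ^ q := hmeas.abs.pow_const q
  have hGmono : Monotone G := fun s₁ s₂ h =>
    lintegral_mono' (Measure.restrict_mono (ball_subset_ball h) le_rfl) le_rfl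
  have hGmeas : Measurable G := hGmono.measurable
  have hmmeas : Measurable fun s : ℝ => ENNReal.ofReal (s ^ n') * κ :=
    ((measurable_id.pow_const n').ennreal_ofReal).mul_const κ
  have hφmeas : Measurable φ :=
    (((hGmeas.div hmmeas).pow_const (1/q)).ennreal_toReal)
  have hνmeas : Measurable (Function.uncurry fun s t : ℝ => ν s t ^ γ) := by
    apply Measurable.pow_const
    exact measurable_const.min
      ((hμmeas.comp measurable_snd).div (hmmeas.comp measurable_fst))
  have hLmeas : Measurable Lf :=
    Measurable.lintegral_prod_right (f := fun s t => ν s t ^ γ) hνmeas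
  -- Step I: identification of avgLq with φ on (0, ∞)
  have hφeq : ∀ s : ℝ, 0 < s → avgLq q f x₀ s = φ s := by
    intro s hs
    have h1 : ∫ x in ball x₀ s, |f x| ^ q = (G s).toReal := by
      rw [hGdef,
        integral_eq_lintegral_of_nonneg_ae (ae_of_all _ fun x => Real.rpow_nonneg (abs_nonneg _) q)
          habsmeas.aestronglyMeasurable]
    rw [avgLq, setAverage_eq, h1, measureReal_def, hm s hs.le, smul_eq_mul]
    show _ = ((G s / (ENNReal.ofReal (s ^ n') * κ)) ^ (1 / q)).toReal
    rw [← ENNReal.toReal_rpow]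
    congr 1
    rw [ENNReal.toReal_div, div_eq_inv_mul]
  -- Step I': the pointwise bound `ofReal (avgLq s) ≤ c₄ * Lf s`
  have hlc : ∀ s : ℝ, G s = ENNReal.ofReal q *
      ∫⁻ t in Ioi 0, volume ({x : Eu n | t < |f x|} ∩ ball x₀ s) * ENNReal.ofReal (t ^ (q-1)) := by
    intro s
    have key := lintegral_rpow_eq_lintegral_meas_lt_mul (μ := volume.restrict (ball x₀ s))
      (f := fun x => |f x|) (ae_of_all _ fun x => abs_nonneg (f x))
      hmeas.abs.aemeasurable hq0
    rw [hGdef]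
    refine key.trans ?_
    congr 1
    refine lintegral_congr fun t => ?_
    congr 1
    rw [Measure.restrict_apply (measurableSet_lt measurable_const hmeas.abs)]
  have hmul : ∀ (m x : ℝ≥0∞), m ≠ 0 → m ≠ ⊤ → m * min 1 (x/m) = min m x := by
    intro m x hm0 hmtop
    rcases le_total x m with h | h
    · have hx1 : x / m ≤ 1 := ENNReal.div_le_of_le_mul (by rwa [one_mul])
      rw [min_eq_right hx1, min_eq_right h, ENNReal.mul_div_cancel hm0 hmtop]
    · have hx1 : 1 ≤ x / m := by
        rw [ENNReal.le_div_iff_mul_le (Or.inl hm0) (Or.inl hmtop), one_mul]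
        exact h
      rw [min_eq_left hx1, min_eq_left h, mul_one]
  have hIle : ∀ s : ℝ, 0 < s → G s ≤ (ENNReal.ofReal (s ^ n') * κ) * (C₃ * Lf s ^ q) := by
    intro s hs
    have hsn : 0 < s ^ n' := Real.rpow_pos_of_pos hs n'
    have hm0 : ENNReal.ofReal (s ^ n') * κ ≠ 0 := by
      simp [hκ0, hsn, ENNReal.ofReal_eq_zero, not_le]
    have hmtop : ENNReal.ofReal (s ^ n') * κ ≠ ⊤ := ENNReal.mul_ne_top ENNReal.ofReal_ne_top hκtop
    have hminle : ∀ t : ℝ, volume ({x : Eu n | t < |f x|} ∩ ball x₀ s) ≤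
        (ENNReal.ofReal (s ^ n') * κ) * ν s t := by
      intro t
      rw [hνdef, hmul _ _ hm0 hmtop]
      refine le_min ?_ ?_
      · rw [← hm s hs.le]
        exact measure_mono inter_subset_right
      · exact measure_mono inter_subset_left
    calc G s = ENNReal.ofReal q *
        ∫⁻ t in Ioi 0, volume ({x : Eu n | t < |f x|} ∩ ball x₀ s) * ENNReal.ofReal (t ^ (q-1)) :=
          hlc s
      _ ≤ ENNReal.ofReal q *
          ∫⁻ t in Ioi 0, ((ENNReal.ofReal (s ^ n') * κ) * ν s t) * ENNReal.ofReal (t ^ (q-1)) := by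
          gcongr with t
          exact hminle t
      _ = (ENNReal.ofReal (s ^ n') * κ) *
          ∫⁻ t in Ioi 0, ENNReal.ofReal (q * t ^ (q-1)) * ν s t := by
          rw [← lintegral_const_mul' _ _ hmtop, ← lintegral_const_mul' _ _ ENNReal.ofReal_ne_top]
          refine setLIntegral_congr_fun measurableSet_Ioi (fun t ht => ?_)
          rw [ENNReal.ofReal_mul hq0.le]
          ring
      _ ≤ (ENNReal.ofReal (s ^ n') * κ) * (C₃ * Lf s ^ q) := by
          refine mul_le_mul_right ?_ _
          refine decay_bound hq0 hγpos hqγ ?_ (fun t => min_le_left _ _)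
          intro t₁ _ t₂ _ h
          exact min_le_min le_rfl (ENNReal.div_le_div_right (hμanti h) _)
  have hφle : ∀ s : ℝ, 0 < s → ENNReal.ofReal (φ s) ≤ c₄ * Lf s := by
    intro s hs
    have hsn : 0 < s ^ n' := Real.rpow_pos_of_pos hs n'
    have hm0 : ENNReal.ofReal (s ^ n') * κ ≠ 0 := by
      simp [hκ0, hsn, ENNReal.ofReal_eq_zero, not_le]
    have hmtop : ENNReal.ofReal (s ^ n') * κ ≠ ⊤ := ENNReal.mul_ne_top ENNReal.ofReal_ne_top hκtop
    have hdiv : G s / (ENNReal.ofReal (s ^ n') * κ) ≤ C₃ * Lf s ^ q := by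
      rw [ENNReal.div_le_iff_le_mul (Or.inl hm0) (Or.inl hmtop)]
      rw [mul_comm]
      exact hIle s hs
    calc ENNReal.ofReal (φ s) ≤ (G s / (ENNReal.ofReal (s ^ n') * κ)) ^ (1/q) :=
          ENNReal.ofReal_toReal_le
      _ ≤ (C₃ * Lf s ^ q) ^ (1/q) := ENNReal.rpow_le_rpow hdiv (by positivity)
      _ = c₄ * Lf s := by
          rw [ENNReal.mul_rpow_of_nonneg _ _ (by positivity), hc₄def,
            ← ENNReal.rpow_mul, mul_one_div, div_self hq0.ne', ENNReal.rpow_one]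
  -- Step II: kernel bound and global finiteness
  set Ck : ℝ := 1 + 1/(n' * γ - 1) with hCkdef
  have hCkpos : 0 < Ck := by
    have : 0 < n' * γ - 1 := by linarith
    positivity
  set c₆ : ℝ≥0∞ := ENNReal.ofReal Ck * (κ ^ (1/n'))⁻¹ with hc₆def
  have hκrp : κ ^ (1/n') ≠ 0 := by
    simp [ENNReal.rpow_eq_zero_iff, hκ0, hκtop]
  have hκrt : κ ^ (1/n') ≠ ⊤ := ENNReal.rpow_ne_top_of_nonneg (by positivity) hκtop
  have hc₆0 : c₆ ≠ 0 := by
    rw [hc₆def]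
    exact mul_ne_zero (by simpa using hCkpos.not_ge) (ENNReal.inv_ne_zero.mpr hκrt)
  have hc₆top : c₆ ≠ ⊤ := ENNReal.mul_ne_top ENNReal.ofReal_ne_top (ENNReal.inv_ne_top.mpr hκrp)
  have hker : ∀ t : ℝ, 0 < t →
      ∫⁻ s in Ioi (0:ℝ), ν s t ^ γ ≤ c₆ * μ' t ^ (1/n') := by
    intro t ht
    by_cases htop : μ' t = ⊤
    · rw [htop, ENNReal.top_rpow_of_pos (by positivity), ENNReal.mul_top hc₆0]
      exact le_top
    · set A : ℝ := (μ' t).toReal with hAdef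
      have hA : 0 ≤ A := ENNReal.toReal_nonneg
      set a : ℝ := (A/κr) ^ (1/n') with hadef
      have ha : 0 ≤ a := Real.rpow_nonneg (by positivity) _
      have hb : ∀ s ∈ Ioi (0:ℝ), ν s t ^ γ ≤ min 1 (ENNReal.ofReal ((a/s) ^ (n' * γ))) := by
        intro s hs
        have hspos : (0:ℝ) < s := hs
        have hsn : 0 < s ^ n' := Real.rpow_pos_of_pos hspos n'
        have hreal : A / (s ^ n' * κr) = (a/s) ^ n' := by
          rw [Real.div_rpow ha hspos.le, hadef, ← Real.rpow_mul (by positivity),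
            one_div, inv_mul_cancel₀ hnR.ne', Real.rpow_one]
          rw [div_div]
          ring_nf
        have hdiveq : μ' t / (ENNReal.ofReal (s ^ n') * κ) = ENNReal.ofReal ((a/s) ^ n') := by
          rw [← hκr', ← ENNReal.ofReal_mul hsn.le, ← ENNReal.ofReal_toReal htop, ← hAdef,
            ← ENNReal.ofReal_div_of_pos (by positivity), hreal]
        have hmin : ν s t = min 1 (ENNReal.ofReal ((a/s) ^ n')) := by
          simp only [hνdef]
          rw [hdiveq]
        rw [hmin]
        have hmono : Monotone (fun x : ℝ≥0∞ => x ^ γ) :=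
          fun x y hxy => ENNReal.rpow_le_rpow hxy hγpos.le
        rw [hmono.map_min, ENNReal.one_rpow,
          ENNReal.ofReal_rpow_of_nonneg (by positivity) hγpos.le,
          ← Real.rpow_mul (by positivity) ]
      calc ∫⁻ s in Ioi (0:ℝ), ν s t ^ γ
          ≤ ∫⁻ s in Ioi (0:ℝ), min 1 (ENNReal.ofReal ((a/s) ^ (n' * γ))) :=
            setLIntegral_mono' measurableSet_Ioi hb
        _ ≤ ENNReal.ofReal (a * (1 + 1/(n' * γ - 1))) := kernel_bound hnγ ha
        _ = c₆ * μ' t ^ (1/n') := by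
            rw [mul_comm a, ENNReal.ofReal_mul hCkpos.le, hadef,
              ← ENNReal.ofReal_rpow_of_nonneg (by positivity) (by positivity),
              ENNReal.ofReal_div_of_pos hκr, hκr', hAdef, ENNReal.ofReal_toReal htop,
              ENNReal.div_rpow_of_nonneg _ _ (by positivity), hc₆def, hCkdef,
              div_eq_mul_inv]
            rw [div_eq_mul_inv]
            ring
  have hswap : ∫⁻ s in Ioi (0:ℝ), Lf s =
      ∫⁻ t in Ioi (0:ℝ), ∫⁻ s in Ioi (0:ℝ), ν s t ^ γ := by
    rw [hLdef]
    exact lintegral_lintegral_swap hνmeas.aemeasurable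
  have htotal : ∫⁻ s in Ioi (0:ℝ), c₄ * Lf s ≠ ⊤ := by
    rw [lintegral_const_mul' _ _ hc₄top]
    have h1 : ∫⁻ s in Ioi (0:ℝ), Lf s ≤ c₆ * ∫⁻ t in Ioi (0:ℝ), μ' t ^ (1/n') := by
      rw [hswap, ← lintegral_const_mul' _ _ hc₆top]
      exact setLIntegral_mono' measurableSet_Ioi hker
    exact ENNReal.mul_ne_top hc₄top
      (lt_of_le_of_lt h1 (ENNReal.mul_lt_top hc₆top.lt_top hB.lt_top)).ne
  -- nonnegativity of avgLq
  have hnn : ∀ s : ℝ, 0 ≤ avgLq q f x₀ s := by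
    intro s
    apply Real.rpow_nonneg
    rw [setAverage_eq, smul_eq_mul]
    have : 0 ≤ ∫ x in ball x₀ s, |f x| ^ q :=
      integral_nonneg fun x => Real.rpow_nonneg (abs_nonneg _) q
    positivity
  -- the integrability part
  have hint : ∀ r : ℝ, 0 < r → IntegrableOn (fun s => avgLq q f x₀ s) (Ioc (0:ℝ) r) := by
    intro r hr
    have haesm : AEStronglyMeasurable (fun s => avgLq q f x₀ s)
        (volume.restrict (Ioc (0:ℝ) r)) := by
      refine hφmeas.aestronglyMeasurable.congr ?_
      filter_upwards [ae_restrict_mem measurableSet_Ioc] with s hs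
      exact (hφeq s hs.1).symm
    refine ⟨haesm, ?_⟩
    rw [hasFiniteIntegral_iff_ofReal (ae_of_all _ fun s => hnn s)]
    calc ∫⁻ s in Ioc (0:ℝ) r, ENNReal.ofReal (avgLq q f x₀ s)
        ≤ ∫⁻ s in Ioc (0:ℝ) r, c₄ * Lf s := by
          refine setLIntegral_mono' measurableSet_Ioc fun s hs => ?_
          rw [hφeq s hs.1]
          exact hφle s hs.1
      _ ≤ ∫⁻ s in Ioi (0:ℝ), c₄ * Lf s := lintegral_mono_set Ioc_subset_Ioi_self
      _ < ⊤ := htotal.lt_top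
  refine ⟨fun r hr => hint r hr, ?_⟩
  -- the tendsto part
  set g : ℝ → ℝ≥0∞ := fun s => c₄ * Lf s with hgdef
  have hWt : Tendsto (fun r : ℝ => ∫⁻ s in Ioc (0:ℝ) r, g s) (𝓝[>] (0:ℝ)) (𝓝 0) := by
    have hsets : Tendsto (fun r : ℝ => (volume.restrict (Ioi (0:ℝ))) (Ioc (0:ℝ) r))
        (𝓝[>] (0:ℝ)) (𝓝 0) := by
      have heq : ∀ r : ℝ, (volume.restrict (Ioi (0:ℝ))) (Ioc (0:ℝ) r) = ENNReal.ofReal r := by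
        intro r
        rw [Measure.restrict_apply measurableSet_Ioc,
          inter_eq_left.mpr Ioc_subset_Ioi_self, Real.volume_Ioc, sub_zero]
      simp_rw [heq]
      rw [show (0:ℝ≥0∞) = ENNReal.ofReal 0 by simp]
      exact (ENNReal.continuous_ofReal.tendsto 0).comp (nhdsWithin_le_nhds)
    have := MeasureTheory.tendsto_setLIntegral_zero (μ := volume.restrict (Ioi (0:ℝ)))
      (f := g) htotal hsets
    refine this.congr fun r => ?_
    rw [Measure.restrict_restrict measurableSet_Ioc,
      inter_eq_left.mpr Ioc_subset_Ioi_self]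
  have hWt' : Tendsto (fun r : ℝ => (∫⁻ s in Ioc (0:ℝ) r, g s).toReal)
      (𝓝[>] (0:ℝ)) (𝓝 0) := by
    have h0 : ((0:ℝ≥0∞)).toReal = 0 := rfl
    rw [← h0]
    exact (ENNReal.tendsto_toReal (by simp)).comp hWt
  refine squeeze_zero' ?_ ?_ hWt'
  · filter_upwards [self_mem_nhdsWithin] with r hr
    exact integral_nonneg fun s => hnn s
  · filter_upwards [self_mem_nhdsWithin] with r hr
    have hfin : ∫⁻ s in Ioc (0:ℝ) r, g s ≠ ⊤ :=
      (lt_of_le_of_lt (lintegral_mono_set Ioc_subset_Ioi_self) htotal.lt_top).ne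
    have haesm : AEStronglyMeasurable (fun s => avgLq q f x₀ s)
        (volume.restrict (Ioc (0:ℝ) r)) := (hint r hr).aestronglyMeasurable
    rw [rieszPot, integral_eq_lintegral_of_nonneg_ae (ae_of_all _ fun s => hnn s) haesm]
    refine ENNReal.toReal_mono hfin ?_
    refine setLIntegral_mono' measurableSet_Ioc fun s hs => ?_
    rw [hφeq s hs.1]
    exact hφle s hs.1


end
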